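/- (Gallai's theorem) For any finite graph G with n vertices and no isolated vertices, the maximum matching number α'(G) and the minimum edge cover number β'(G) satisfy α'(G) + β'(G) = n. -/

import Mathlib

/-- `M` is a matching in `G`: a set of edges of `G` that are pairwise
vertex-disjoint. -/
def IsMatchingSet {V : Type*} (G : SimpleGraph V) (M : Finset (Sym2 V)) : Prop :=
  ↑M ⊆ G.edgeSet ∧ ∀ e ∈ M, ∀ f ∈ M, e ≠ f → ∀ v : V, ¬(v ∈ e ∧ v ∈ f)

/-- `C` is an edge cover of `G`: a set of edges of `G` such that every vertex
is incident to at least one edge of `C`. -/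
def IsEdgeCover {V : Type*} (G : SimpleGraph V) (C : Finset (Sym2 V)) : Prop :=
  ↑C ⊆ G.edgeSet ∧ ∀ v : V, ∃ e ∈ C, v ∈ e

/-!
A matching `M` leaves `n - 2|M|` vertices uncovered; adding one edge at each
of them gives an edge cover of size at most `n - |M|`, so `α' + β' ≤ n`. Conversely, let
`N` be a maximum matching inside an edge cover `C`. Choosing for every vertex missed by `N`
an edge of `C` through it is injective (a shared edge would join two unmatched vertices and
could be added to `N`), and lands in `C \ N`; hence `n - 2|N| ≤ |C| - |N|`, so
`n ≤ α' + β'`.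
-/

open Finset

section

variable {V : Type*} {G : SimpleGraph V}

namespace IsMatchingSet

theorem empty : IsMatchingSet G ∅ := by
  simp [IsMatchingSet]

variable [DecidableEq V] {M : Finset (Sym2 V)}

theorem card_biUnion_toFinset (hM : IsMatchingSet G M) :
    #(M.biUnion Sym2.toFinset) = 2 * #M := by
  rw [card_biUnion, sum_congr rfl fun e he ↦
    Sym2.card_toFinset_of_not_isDiag e (G.not_isDiag_of_mem_edgeSet (hM.1 he)), sum_const,
    smul_eq_mul, mul_comm]
  intro e he f hf hef
  rw [Function.onFun, disjoint_left]
  exact fun v hve hvf ↦ hM.2 e he f hf hef v ⟨Sym2.mem_toFinset.1 hve, Sym2.mem_toFinset.1 hvf⟩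

theorem insert (hM : IsMatchingSet G M) {e : Sym2 V} (he : e ∈ G.edgeSet)
    (hfree : ∀ v ∈ e, v ∉ M.biUnion Sym2.toFinset) : IsMatchingSet G (insert e M) := by
  have hfree' : ∀ v ∈ e, ∀ f ∈ M, v ∉ f := fun v hv f hf hvf ↦
    hfree v hv (mem_biUnion.2 ⟨f, hf, Sym2.mem_toFinset.2 hvf⟩)
  refine ⟨?_, ?_⟩
  · rw [coe_insert]
    exact Set.insert_subset he hM.1
  · simp only [mem_insert]
    rintro f (rfl | hf) g (rfl | hg) hfg v ⟨hvf, hvg⟩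
    · exact hfg rfl
    · exact hfree' v hvf g hg hvg
    · exact hfree' v hvg f hf hvf
    · exact hM.2 f hf g hg hfg v ⟨hvf, hvg⟩

end IsMatchingSet

theorem exists_isMatchingSet_subset_maximal [DecidableEq V] {C : Finset (Sym2 V)}
    (hC : ↑C ⊆ G.edgeSet) :
    ∃ N ⊆ C, IsMatchingSet G N ∧ ∀ e ∈ C, e ∉ N → ∃ v ∈ e, v ∈ N.biUnion Sym2.toFinset := by
  classical
  obtain ⟨N, hN, hNmax⟩ := exists_max_image (C.powerset.filter (IsMatchingSet G)) card
    ⟨∅, by simp [IsMatchingSet.empty]⟩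
  rw [mem_filter, mem_powerset] at hN
  refine ⟨N, hN.1, hN.2, fun e heC heN ↦ ?_⟩
  by_contra! hfree
  have hbigger := hNmax (insert e N) (by
    rw [mem_filter, mem_powerset]
    exact ⟨insert_subset heC hN.1, hN.2.insert (hC heC) hfree⟩)
  rw [card_insert_of_notMem heN] at hbigger
  omega

variable [Fintype V] [DecidableEq V]

theorem IsMatchingSet.card_unmatched_add {M : Finset (Sym2 V)} (hM : IsMatchingSet G M) :
    #(univ \ M.biUnion Sym2.toFinset) + 2 * #M = Fintype.card V := by
  rw [← hM.card_biUnion_toFinset, card_sdiff_add_card_eq_card (subset_univ _), card_univ]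

theorem exists_isEdgeCover_card_add_le (hiso : ∀ v : V, ∃ u : V, G.Adj v u)
    {M : Finset (Sym2 V)} (hM : IsMatchingSet G M) :
    ∃ C, IsEdgeCover G C ∧ #C + #M ≤ Fintype.card V := by
  choose nbr hnbr using hiso
  set U := univ \ M.biUnion Sym2.toFinset
  have hU : #U + 2 * #M = Fintype.card V := hM.card_unmatched_add
  refine ⟨M ∪ U.image fun v ↦ s(v, nbr v), ⟨?_, fun v ↦ ?_⟩, ?_⟩
  · rw [coe_union, coe_image]
    exact Set.union_subset hM.1 (Set.image_subset_iff.2 fun v _ ↦ hnbr v)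
  · by_cases hv : v ∈ M.biUnion Sym2.toFinset
    · obtain ⟨e, he, hve⟩ := mem_biUnion.1 hv
      exact ⟨e, mem_union_left _ he, Sym2.mem_toFinset.1 hve⟩
    · exact ⟨s(v, nbr v), mem_union_right _ (mem_image_of_mem _ (by simp [U, hv])),
        Sym2.mem_mk_left _ _⟩
  · have := card_union_le M (U.image fun v ↦ s(v, nbr v))
    have := card_image_le (s := U) (f := fun v ↦ s(v, nbr v))
    omega

theorem IsEdgeCover.exists_isMatchingSet_card_add_ge {C : Finset (Sym2 V)}
    (hC : IsEdgeCover G C) : ∃ N, IsMatchingSet G N ∧ Fintype.card V ≤ #N + #C := by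
  obtain ⟨N, hNC, hN, hNmax⟩ := exists_isMatchingSet_subset_maximal hC.1
  choose edge hedgeC hvedge using hC.2
  set U := univ \ N.biUnion Sym2.toFinset
  have hU : #U + 2 * #N = Fintype.card V := hN.card_unmatched_add
  have hunmatched {v} (hv : v ∈ U) : ∀ e ∈ N, v ∉ e := fun e he hve ↦
    (mem_sdiff.1 hv).2 (mem_biUnion.2 ⟨e, he, Sym2.mem_toFinset.2 hve⟩)
  have hedgeN {v} (hv : v ∈ U) : edge v ∉ N := fun h ↦ hunmatched hv _ h (hvedge v)
  have hinj : Set.InjOn edge U := by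
    intro v hv w hw hvw
    by_contra hne
    have hedge : edge v = s(v, w) := (Sym2.mem_and_mem_iff hne).1 ⟨hvedge v, hvw ▸ hvedge w⟩
    obtain ⟨x, hx, hxN⟩ := hNmax _ (hedgeC v) (hedgeN hv)
    obtain ⟨e, he, hxe⟩ := mem_biUnion.1 hxN
    rw [hedge, Sym2.mem_iff] at hx
    rcases hx with rfl | rfl
    · exact hunmatched hv e he (Sym2.mem_toFinset.1 hxe)
    · exact hunmatched hw e he (Sym2.mem_toFinset.1 hxe)
  have hUC : #U ≤ #(C \ N) := card_le_card_of_injOn edge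
    (fun v hv ↦ mem_sdiff.2 ⟨hedgeC v, hedgeN hv⟩) hinj
  rw [card_sdiff_of_subset hNC] at hUC
  have := card_le_card hNC
  exact ⟨N, hN, by omega⟩

end

theorem gallai_general {V : Type*} [Fintype V] (G : SimpleGraph V)
    (hiso : ∀ v : V, ∃ u : V, G.Adj v u) :
    sSup {k : ℕ | ∃ M : Finset (Sym2 V), IsMatchingSet G M ∧ M.card = k} +
      sInf {k : ℕ | ∃ C : Finset (Sym2 V), IsEdgeCover G C ∧ C.card = k} =
      Fintype.card V := by
  classical
  set matchingSizes := {k : ℕ | ∃ M : Finset (Sym2 V), IsMatchingSet G M ∧ M.card = k}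
  set coverSizes := {k : ℕ | ∃ C : Finset (Sym2 V), IsEdgeCover G C ∧ C.card = k}
  have hbdd : BddAbove matchingSizes := ⟨Fintype.card (Sym2 V), by
    rintro _ ⟨M, -, rfl⟩
    exact card_le_univ M⟩
  have hcover : IsEdgeCover G G.edgeFinset := ⟨by simp, fun v ↦
    have ⟨u, hu⟩ := hiso v
    ⟨s(v, u), by simpa using hu, Sym2.mem_mk_left _ _⟩⟩
  obtain ⟨M, hM, hMcard⟩ : sSup matchingSizes ∈ matchingSizes :=
    Nat.sSup_mem ⟨0, ∅, IsMatchingSet.empty, rfl⟩ hbdd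
  obtain ⟨C, hC, hCcard⟩ : sInf coverSizes ∈ coverSizes := Nat.sInf_mem ⟨_, _, hcover, rfl⟩
  obtain ⟨C', hC', hC'card⟩ := exists_isEdgeCover_card_add_le hiso hM
  obtain ⟨N, hN, hNcard⟩ := hC.exists_isMatchingSet_card_add_ge
  have hNM : #N ≤ sSup matchingSizes := le_csSup hbdd ⟨N, hN, rfl⟩
  have hCC' : sInf coverSizes ≤ #C' := Nat.sInf_le ⟨C', hC', rfl⟩
  omega

/-- Gallai's theorem: for a finite graph with `n` vertices and no isolated
vertices, the maximum matching number plus the minimum edge cover number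
equals `n`. -/
theorem gallai {V : Type*} [Fintype V] [DecidableEq V] (G : SimpleGraph V)
    (hiso : ∀ v : V, ∃ u : V, G.Adj v u) :
    sSup {k : ℕ | ∃ M : Finset (Sym2 V), IsMatchingSet G M ∧ M.card = k} +
      sInf {k : ℕ | ∃ C : Finset (Sym2 V), IsEdgeCover G C ∧ C.card = k} =
      Fintype.card V :=
  gallai_general G hiso
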